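/- Let d ≥ 3 be odd and N = 2^{(d-1)/2}. With Σ, 𝒜, Ψ₀, s and Ψ as in the context, the pair (Ψ, 𝒜) solves the zero-mode equation pointwise: γ·(-i∇)Ψ(x) = (γ·𝒜(x)) Ψ(x) for all x ∈ ℝ^d. -/

import Mathlib

/-!
Write `B = γ·x`, `G = γ₁`, `S = γ·(Σx)` and `u = Ψ₀ + i s BΨ₀`, so that `Ψ(x) = (1+|x|²)^(-d/2) u`.
Since `γⱼ² = 1`, differentiating gives `γ·(-i∇)Ψ = i d (1+|x|²)^(-d/2-1) Bu + d s (1+|x|²)^(-d/2) Ψ₀`,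
while `γ·𝒜 = d (1+|x|²)^(-2) ((1-|x|²) G + 2x₁ B + 2S)`. The Clifford relations give `B² = |x|²`,
`GB + BG = 2x₁` and, because `Σ` is skew, `SB + BS = 0`; the annihilation conditions on `Ψ₀` pair
the coordinates `2α, 2α+1` so that `SΨ₀ = i BΨ₀ - i s x₁ Ψ₀`, and `GΨ₀ = sΨ₀`. With these relations
(and `s² = 1`) both sides of the equation become the same combination of `Ψ₀` and `BΨ₀`.
-/

open MeasureTheory Complex Filter ENNReal

noncomputable section

/-- `ℝ^d` with the Euclidean norm. -/
abbrev ESp (d : ℕ) := EuclideanSpace ℝ (Fin d)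

/-- Spinor space `ℂ^N` with the Hermitian norm. -/
abbrev Spinor (N : ℕ) := EuclideanSpace ℂ (Fin N)

/-- Action of an `N × N` complex matrix on a spinor. -/
def mulVecE {N : ℕ} (M : Matrix (Fin N) (Fin N) ℂ) (v : Spinor N) : Spinor N :=
  Matrix.toEuclideanLin M v

/-- Partial derivative in the `j`-th coordinate direction. -/
def pd {d : ℕ} {V : Type*} [NormedAddCommGroup V] [NormedSpace ℝ V]
    (j : Fin d) (f : ESp d → V) (x : ESp d) : V :=
  fderiv ℝ f x (EuclideanSpace.single j 1)

/-- The Dirac operator `γ·(-i∇)ψ = ∑ⱼ γⱼ (-i ∂ⱼ ψ)`. -/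
def dirac {d N : ℕ} (γ : Fin d → Matrix (Fin N) (Fin N) ℂ)
    (ψ : ESp d → Spinor N) (x : ESp d) : Spinor N :=
  ∑ j, mulVecE (γ j) ((-Complex.I) • pd j ψ x)

/-- `γ·a = ∑ⱼ aⱼ γⱼ` for a real vector `a`. -/
def gdotR {d N : ℕ} (γ : Fin d → Matrix (Fin N) (Fin N) ℂ) (v : ESp d) :
    Matrix (Fin N) (Fin N) ℂ :=
  ∑ j, (v j : ℂ) • γ j

/-- The skew-symmetric `d×d` matrix `Σ`: block diagonal with a `1×1` zero block
followed by `(d-1)/2` blocks `((0,-1),(1,0))` (0-based indices: `Σ_{j,j+1} = -1`,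
`Σ_{j+1,j} = 1` for odd `j`). -/
def SigmaMat (d : ℕ) : Matrix (Fin d) (Fin d) ℝ :=
  Matrix.of fun j k =>
    if Odd (j : ℕ) ∧ (k : ℕ) = (j : ℕ) + 1 then -1
    else if Odd (k : ℕ) ∧ (j : ℕ) = (k : ℕ) + 1 then 1
    else 0

/-- The vector field `𝒜(x) = d(1+|x|²)^{-2}((1-|x|²)e₁ + 2x₁x + 2Σx)`. -/
def curlyA (d : ℕ) (x : ESp d) : ESp d :=
  (WithLp.equiv 2 (∀ _ : Fin d, ℝ)).symm fun k =>
    (d : ℝ) * ((1 + ‖x‖ ^ 2) ^ 2)⁻¹ *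
      ((if (k : ℕ) = 0 then 1 - ‖x‖ ^ 2 else 0)
        + 2 * x ⟨0, lt_of_le_of_lt (Nat.zero_le (k : ℕ)) k.isLt⟩ * x k
        + 2 * ((SigmaMat d).mulVec (fun j => x j)) k)


open scoped Matrix

section Gamma

variable {d N : ℕ}

@[simp] lemma add_mulVecE (A B : Matrix (Fin N) (Fin N) ℂ) (v : Spinor N) :
    mulVecE (A + B) v = mulVecE A v + mulVecE B v := by
  simp [mulVecE]

@[simp] lemma smul_mulVecE (c : ℂ) (A : Matrix (Fin N) (Fin N) ℂ) (v : Spinor N) :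
    mulVecE (c • A) v = c • mulVecE A v := by
  simp [mulVecE]

@[simp] lemma one_mulVecE (v : Spinor N) : mulVecE 1 v = v := by
  simp [mulVecE]

lemma mulVecE_mulVecE (A B : Matrix (Fin N) (Fin N) ℂ) (v : Spinor N) :
    mulVecE A (mulVecE B v) = mulVecE (A * B) v := by
  simp [mulVecE, Matrix.toLpLin_apply, Matrix.mulVec_mulVec]

lemma sum_mulVecE {ι : Type*} (s : Finset ι) (A : ι → Matrix (Fin N) (Fin N) ℂ) (v : Spinor N) :
    mulVecE (∑ i ∈ s, A i) v = ∑ i ∈ s, mulVecE (A i) v := by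
  simp [mulVecE]

lemma mulVecE_add (A : Matrix (Fin N) (Fin N) ℂ) (v w : Spinor N) :
    mulVecE A (v + w) = mulVecE A v + mulVecE A w := by
  simp [mulVecE]

lemma mulVecE_smul {R : Type*} [SMul R ℂ] [IsScalarTower R ℂ ℂ] (A : Matrix (Fin N) (Fin N) ℂ)
    (c : R) (v : Spinor N) :
    mulVecE A (c • v) = c • mulVecE A v := by
  simp [mulVecE]

variable (γ : Fin d → Matrix (Fin N) (Fin N) ℂ)

lemma mulVecE_gdotR (a : ESp d) (v : Spinor N) :
    mulVecE (gdotR γ a) v = ∑ j, (a j : ℂ) • mulVecE (γ j) v := by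
  simp only [gdotR, sum_mulVecE, smul_mulVecE]

lemma gdotR_add (a b : ESp d) : gdotR γ (a + b) = gdotR γ a + gdotR γ b := by
  simp [gdotR, add_smul, Finset.sum_add_distrib]

lemma gdotR_smul (c : ℝ) (a : ESp d) : gdotR γ (c • a) = (c : ℂ) • gdotR γ a := by
  simp only [gdotR, Finset.smul_sum, smul_smul, PiLp.smul_apply, smul_eq_mul,
    Complex.ofReal_mul]

lemma gdotR_single (j : Fin d) : gdotR γ (EuclideanSpace.single j 1) = γ j := by
  simp [gdotR]

def gdotRMulVecE (v : Spinor N) : ESp d →ₗ[ℝ] Spinor N where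
  toFun a := mulVecE (gdotR γ a) v
  map_add' a b := by simp [gdotR_add]
  map_smul' c a := by
    simp only [gdotR_smul, smul_mulVecE, RingHom.id_apply]
    rfl

variable {γ}
variable (hanti : ∀ j k, γ j * γ k + γ k * γ j = if j = k then (2 : ℂ) • 1 else 0)
include hanti

lemma gdotR_mul_add_mul (a b : ESp d) :
    gdotR γ a * gdotR γ b + gdotR γ b * gdotR γ a = ((2 * inner ℝ a b : ℝ) : ℂ) • 1 := by
  calc gdotR γ a * gdotR γ b + gdotR γ b * gdotR γ a
      = ∑ j, ∑ k, ((a j * b k : ℝ) : ℂ) • (γ j * γ k + γ k * γ j) := by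
        simp only [gdotR, Finset.sum_mul_sum, smul_mul_smul_comm, smul_add,
          Finset.sum_add_distrib]
        rw [Finset.sum_comm (f := fun j k => ((b j : ℂ) * a k) • (γ j * γ k))]
        push_cast
        simp only [mul_comm (b _ : ℂ)]
    _ = ((2 * inner ℝ a b : ℝ) : ℂ) • 1 := by
        simp [hanti, PiLp.inner_apply, Finset.sum_smul, smul_smul, Finset.mul_sum, mul_comm]

lemma gdotR_mul_self (a : ESp d) : gdotR γ a * gdotR γ a = ((‖a‖ ^ 2 : ℝ) : ℂ) • 1 := by
  have h := gdotR_mul_add_mul hanti a a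
  rw [real_inner_self_eq_norm_sq, Complex.ofReal_mul, Complex.ofReal_ofNat, mul_smul,
    ← two_smul ℂ] at h
  exact smul_right_injective _ (two_ne_zero : (2 : ℂ) ≠ 0) h

lemma mulVecE_gdotR_add_mulVecE_gdotR (a b : ESp d) (v : Spinor N) :
    mulVecE (gdotR γ a) (mulVecE (gdotR γ b) v) + mulVecE (gdotR γ b) (mulVecE (gdotR γ a) v)
      = ((2 * inner ℝ a b : ℝ) : ℂ) • v := by
  rw [mulVecE_mulVecE, mulVecE_mulVecE, ← add_mulVecE, gdotR_mul_add_mul hanti, smul_mulVecE,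
    one_mulVecE]

lemma gamma_mul_self (j : Fin d) : γ j * γ j = 1 := by
  simpa [gdotR_single] using gdotR_mul_self hanti (EuclideanSpace.single j 1)

end Gamma

section Derivative

lemma pd_one_add_norm_sq_rpow_smul {d : ℕ} {V : Type*} [NormedAddCommGroup V] [NormedSpace ℝ V]
    (p : ℝ) {g : ESp d → V} {g' : ESp d →L[ℝ] V} {x : ESp d} (hg : HasFDerivAt g g' x)
    (j : Fin d) :
    pd j (fun y => (1 + ‖y‖ ^ 2) ^ p • g y) x
      = (2 * p * x j * (1 + ‖x‖ ^ 2) ^ (p - 1)) • g x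
        + (1 + ‖x‖ ^ 2) ^ p • g' (EuclideanSpace.single j 1) := by
  have hf : HasFDerivAt (fun y : ESp d => (1 + ‖y‖ ^ 2) ^ p)
      ((p * (1 + ‖x‖ ^ 2) ^ (p - 1)) • 2 • innerSL ℝ x) x := by
    simpa using ((hasFDerivAt_id x).norm_sq.const_add 1).rpow_const (p := p)
      (Or.inl (by positivity))
  rw [pd, (hf.fun_smul hg).fderiv]
  simp only [add_apply, smul_apply, ContinuousLinearMap.smulRight_apply, coe_innerSL_apply,
    EuclideanSpace.inner_single_right, Real.ringHom_apply, one_mul, nsmul_eq_mul, Nat.cast_ofNat,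
    smul_eq_mul]
  module

lemma dirac_one_add_norm_sq_rpow_smul {d N : ℕ} {γ : Fin d → Matrix (Fin N) (Fin N) ℂ}
    (hanti : ∀ j k, γ j * γ k + γ k * γ j = if j = k then (2 : ℂ) • 1 else 0)
    (p : ℝ) (c : ℂ) (v : Spinor N) (x : ESp d) :
    dirac γ (fun y => (1 + ‖y‖ ^ 2) ^ p • (v + c • mulVecE (gdotR γ y) v)) x
      = (-2 * I * p * ((1 + ‖x‖ ^ 2) ^ (p - 1) : ℝ)) •
          mulVecE (gdotR γ x) (v + c • mulVecE (gdotR γ x) v)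
        + (-I * c * d * ((1 + ‖x‖ ^ 2) ^ p : ℝ)) • v := by
  have hg : HasFDerivAt (fun y => v + c • mulVecE (gdotR γ y) v)
      (c • LinearMap.toContinuousLinearMap (gdotRMulVecE γ v)) x :=
    ((LinearMap.toContinuousLinearMap (gdotRMulVecE γ v)).hasFDerivAt.const_smul c).const_add v
  have hterm : ∀ j, mulVecE (γ j) ((-I) • pd j
      (fun y => (1 + ‖y‖ ^ 2) ^ p • (v + c • mulVecE (gdotR γ y) v)) x)
      = ((-2 * I * p * ((1 + ‖x‖ ^ 2) ^ (p - 1) : ℝ)) * x j) •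
          mulVecE (γ j) (v + c • mulVecE (gdotR γ x) v)
        + (-I * c * ((1 + ‖x‖ ^ 2) ^ p : ℝ)) • v := by
    intro j
    rw [pd_one_add_norm_sq_rpow_smul p hg]
    simp only [smul_apply, LinearMap.coe_toContinuousLinearMap', gdotRMulVecE, LinearMap.coe_mk,
      AddHom.coe_mk, gdotR_single, mulVecE_smul, mulVecE_add, mulVecE_mulVecE,
      gamma_mul_self hanti, one_mulVecE]
    module
  set u := v + c • mulVecE (gdotR γ x) v
  rw [dirac, Finset.sum_congr rfl fun j _ => hterm j, Finset.sum_add_distrib, Finset.sum_const,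
    Finset.card_univ, Fintype.card_fin, mulVecE_gdotR γ x u, Finset.smul_sum,
    ← Nat.cast_smul_eq_nsmul ℂ]
  simp only [smul_smul]
  congr 2
  ring

end Derivative

section Sigma

variable {d N : ℕ}

def sigmaVec (x : ESp d) : ESp d := WithLp.toLp 2 ((SigmaMat d).mulVec (fun j => x j))

lemma SigmaMat_transpose : (SigmaMat d)ᵀ = -SigmaMat d := by
  ext j k
  simp only [SigmaMat, Matrix.transpose_apply, Matrix.of_apply, Matrix.neg_apply, Nat.odd_iff]
  split_ifs <;> first | omega | norm_num

lemma inner_sigmaVec_self (x : ESp d) : inner ℝ (sigmaVec x) x = 0 := by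
  have h : (fun j => x j) ⬝ᵥ (SigmaMat d).mulVec (fun j => x j)
      = -((fun j => x j) ⬝ᵥ (SigmaMat d).mulVec (fun j => x j)) := by
    conv_lhs => rw [Matrix.dotProduct_mulVec, ← Matrix.mulVec_transpose, SigmaMat_transpose,
      Matrix.neg_mulVec, neg_dotProduct, dotProduct_comm]
  simp only [sigmaVec, PiLp.inner_apply, RCLike.inner_apply, conj_trivial]
  change (fun j => x j) ⬝ᵥ (SigmaMat d).mulVec (fun j => x j) = 0
  linarith

lemma curlyA_eq (hd : 0 < d) (x : ESp d) :
    curlyA d x = ((d : ℝ) * ((1 + ‖x‖ ^ 2) ^ 2)⁻¹) •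
      ((1 - ‖x‖ ^ 2) • EuclideanSpace.single ⟨0, hd⟩ 1 + (2 * x ⟨0, hd⟩) • x
        + (2 : ℝ) • sigmaVec x) := by
  ext k
  simp only [curlyA, sigmaVec, WithLp.equiv_symm_apply, PiLp.smul_apply, PiLp.add_apply,
    PiLp.toLp_apply, PiLp.single_apply, smul_eq_mul, Fin.ext_iff]
  split_ifs <;> ring

variable {γ : Fin d → Matrix (Fin N) (Fin N) ℂ} {v : Spinor N}
  (hpair : ∀ j k : Fin d, Odd (j : ℕ) → (k : ℕ) = j + 1 →
    mulVecE (γ j) v + I • mulVecE (γ k) v = 0)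
include hpair

-- Column `k` of `Σ` has a single nonzero entry, at the partner of `k` in its pair
-- `{2α - 1, 2α}`, and on `v` the pairing condition turns that partner's `γ` into `I • γ k`.
lemma sum_SigmaMat_smul_mulVecE (hodd : Odd d) (k : Fin d) (hk0 : (k : ℕ) ≠ 0) :
    ∑ j, (SigmaMat d j k : ℂ) • mulVecE (γ j) v = I • mulVecE (γ k) v := by
  obtain ⟨k, hk⟩ := k
  simp only at hk0
  obtain ⟨b, rfl⟩ := hodd
  rcases Nat.even_or_odd' k with ⟨a, rfl | rfl⟩
  · have hpartner := hpair ⟨2 * a - 1, by omega⟩ ⟨2 * a, hk⟩ ⟨a - 1, by simp only; omega⟩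
      (by simp only; omega)
    rw [Finset.sum_eq_single ⟨2 * a - 1, by omega⟩]
    · simp only [SigmaMat, Matrix.of_apply, Nat.odd_iff]
      split_ifs <;> try omega
      linear_combination (norm := module) -hpartner
    · rintro ⟨j, hj⟩ _ hne
      simp only [SigmaMat, Matrix.of_apply, Nat.odd_iff, ne_eq, Fin.mk.injEq] at hne ⊢
      split_ifs <;> first | omega | simp
    · simp
  · have hpartner := hpair ⟨2 * a + 1, hk⟩ ⟨2 * a + 1 + 1, by omega⟩ ⟨a, rfl⟩ rfl
    rw [Finset.sum_eq_single ⟨2 * a + 1 + 1, by omega⟩]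
    · simp only [SigmaMat, Matrix.of_apply, Nat.odd_iff, and_true]
      split_ifs <;> try omega
      linear_combination (norm := module)
        (-I) • hpartner + I_sq • mulVecE (γ ⟨2 * a + 1 + 1, _⟩) v
    · rintro ⟨j, hj⟩ _ hne
      simp only [SigmaMat, Matrix.of_apply, Nat.odd_iff, ne_eq, Fin.mk.injEq] at hne ⊢
      split_ifs <;> first | omega | simp
    · simp

lemma mulVecE_gdotR_sigmaVec (hodd : Odd d) {s : ℂ} (hγ₀ : mulVecE (γ ⟨0, hodd.pos⟩) v = s • v)
    (x : ESp d) :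
    mulVecE (gdotR γ (sigmaVec x)) v
      = I • mulVecE (gdotR γ x) v - (I * s * x ⟨0, hodd.pos⟩) • v := by
  set z : Fin d := ⟨0, hodd.pos⟩
  have hz : ∀ k ∈ Finset.univ.erase z, (k : ℕ) ≠ 0 := fun k hk h0 =>
    (Finset.mem_erase.1 hk).1 (Fin.ext h0)
  calc mulVecE (gdotR γ (sigmaVec x)) v
      = ∑ k, (x k : ℂ) • ∑ j, (SigmaMat d j k : ℂ) • mulVecE (γ j) v := by
        simp only [mulVecE_gdotR, sigmaVec, Matrix.mulVec, dotProduct, Finset.smul_sum, smul_smul]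
        push_cast
        simp only [Finset.sum_smul]
        rw [Finset.sum_comm]
        simp only [mul_comm]
    _ = ∑ k ∈ Finset.univ.erase z, (x k : ℂ) • I • mulVecE (γ k) v := by
        have hcol₀ : ∑ j, (SigmaMat d j z : ℂ) • mulVecE (γ j) v = 0 := by simp [z, SigmaMat]
        rw [← Finset.add_sum_erase _ _ (Finset.mem_univ z), hcol₀, smul_zero, zero_add]
        exact Finset.sum_congr rfl fun k hk => by
          rw [sum_SigmaMat_smul_mulVecE hpair hodd k (hz k hk)]
    _ = _ := by
        rw [mulVecE_gdotR, ← Finset.add_sum_erase _ _ (Finset.mem_univ z), hγ₀]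
        simp only [smul_add, Finset.smul_sum, smul_comm I]
        module

end Sigma

-- The zero-mode equation at `x` divided by `d (1 + |x|²)^(-d/2-1)`, for `B = γ·x`, `G = γ₁`,
-- `S = γ·Σx`, `ρ = |x|²`, `x₀ = x₁`.
theorem zero_mode_identity {V : Type*} [AddCommGroup V] [Module ℂ V]
    (B G S : Module.End ℂ V) (ψ u : V) (ρ x₀ s : ℂ) (hs : s * s = 1)
    (hBB : B (B ψ) = ρ • ψ) (hGψ : G ψ = s • ψ) (hGB : G (B ψ) + B (G ψ) = (2 * x₀) • ψ)
    (hSB : S (B ψ) + B (S ψ) = 0) (hSψ : S ψ = I • B ψ - (I * s * x₀) • ψ)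
    (hu : u = ψ + (I * s) • B ψ) :
    (1 + ρ) • (I • B u + (s * (1 + ρ)) • ψ) = (1 - ρ) • G u + (2 * x₀) • B u + (2 : ℂ) • S u := by
  have hGB' : G (B ψ) = (2 * x₀) • ψ - s • B ψ := by rw [← hGB, hGψ, map_smul]; abel
  have hSB' : S (B ψ) = -(I • (ρ • ψ)) + (I * s * x₀) • B ψ := by
    rw [eq_neg_of_add_eq_zero_left hSB, hSψ, map_sub, map_smul, map_smul, hBB]; module
  subst hu
  simp only [map_add, map_smul, hBB, hGψ, hGB', hSψ, hSB']
  match_scalars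
  · linear_combination ((1 - ρ) * I - 2 * x₀ * I ^ 2) * hs - 2 * x₀ * I_sq
  · linear_combination s * ρ * (3 + ρ) * I_sq

lemma zero_mode_identity_gdotR {d N : ℕ} (hodd : Odd d) {γ : Fin d → Matrix (Fin N) (Fin N) ℂ}
    (hanti : ∀ j k, γ j * γ k + γ k * γ j = if j = k then (2 : ℂ) • 1 else 0) {Ψ₀ : Spinor N}
    (hpair : ∀ j k : Fin d, Odd (j : ℕ) → (k : ℕ) = j + 1 →
      mulVecE (γ j) Ψ₀ + I • mulVecE (γ k) Ψ₀ = 0)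
    {s : ℝ} (hs : s = 1 ∨ s = -1) (hsΨ₀ : mulVecE (γ ⟨0, hodd.pos⟩) Ψ₀ = (s : ℂ) • Ψ₀)
    (x : ESp d) :
    let u := Ψ₀ + (I * s) • mulVecE (gdotR γ x) Ψ₀
    (1 + ((‖x‖ ^ 2 : ℝ) : ℂ)) • (I • mulVecE (gdotR γ x) u + (s * (1 + ((‖x‖ ^ 2 : ℝ) : ℂ))) • Ψ₀)
      = (1 - ((‖x‖ ^ 2 : ℝ) : ℂ)) • mulVecE (γ ⟨0, hodd.pos⟩) u
        + (2 * (x ⟨0, hodd.pos⟩ : ℂ)) • mulVecE (gdotR γ x) u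
        + (2 : ℂ) • mulVecE (gdotR γ (sigmaVec x)) u := by
  set z : Fin d := ⟨0, hodd.pos⟩
  have hss : (s : ℂ) * s = 1 := by rcases hs with rfl | rfl <;> norm_num
  have hBB : mulVecE (gdotR γ x) (mulVecE (gdotR γ x) Ψ₀) = ((‖x‖ ^ 2 : ℝ) : ℂ) • Ψ₀ := by
    rw [mulVecE_mulVecE, gdotR_mul_self hanti, smul_mulVecE, one_mulVecE]
  have hGB : mulVecE (γ z) (mulVecE (gdotR γ x) Ψ₀) + mulVecE (gdotR γ x) (mulVecE (γ z) Ψ₀)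
      = (2 * (x z : ℂ)) • Ψ₀ := by
    simpa [gdotR_single, EuclideanSpace.inner_single_left] using
      mulVecE_gdotR_add_mulVecE_gdotR hanti (EuclideanSpace.single z 1) x Ψ₀
  have hSB : mulVecE (gdotR γ (sigmaVec x)) (mulVecE (gdotR γ x) Ψ₀)
      + mulVecE (gdotR γ x) (mulVecE (gdotR γ (sigmaVec x)) Ψ₀) = 0 := by
    simpa [inner_sigmaVec_self] using mulVecE_gdotR_add_mulVecE_gdotR hanti (sigmaVec x) x Ψ₀
  exact zero_mode_identity (Matrix.toEuclideanLin (gdotR γ x)) (Matrix.toEuclideanLin (γ z))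
    (Matrix.toEuclideanLin (gdotR γ (sigmaVec x))) Ψ₀ _ _ _ _ hss hBB hsΨ₀ hGB hSB
    (mulVecE_gdotR_sigmaVec hpair hodd hsΨ₀ x) rfl

/-- In odd dimensions, the pair `(Ψ, 𝒜)` of Loss–Yau type solves the
zero-mode equation pointwise: `γ·(-i∇)Ψ(x) = (γ·𝒜(x))Ψ(x)`. -/
theorem loss_yau_zero_mode
    (d : ℕ) (hd : 3 ≤ d) (hodd : Odd d) (N : ℕ)
    (γ : Fin d → Matrix (Fin N) (Fin N) ℂ)
    (hanti : ∀ j k, γ j * γ k + γ k * γ j = if j = k then (2 : ℂ) • 1 else 0)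
    (Ψ₀ : Spinor N)
    (hvac : ∀ (α : ℕ) (h1 : 1 ≤ α) (h2 : 2 * α + 1 ≤ d),
      mulVecE (γ ⟨2 * α - 1, by omega⟩ + Complex.I • γ ⟨2 * α, by omega⟩) Ψ₀ = 0)
    (s : ℝ) (hs : s = 1 ∨ s = -1)
    (hsΨ₀ : mulVecE (γ ⟨0, by omega⟩) Ψ₀ = (s : ℂ) • Ψ₀)
    (Ψ : ESp d → Spinor N)
    (hΨ : Ψ = fun y => (((1 + ‖y‖ ^ 2) ^ (-(d : ℝ) / 2) : ℝ))
      • (Ψ₀ + (Complex.I * (s : ℂ)) • mulVecE (gdotR γ y) Ψ₀)) :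
    ∀ x : ESp d, dirac γ Ψ x = mulVecE (gdotR γ (curlyA d x)) (Ψ x) := by
  intro x
  subst hΨ
  have hpair : ∀ j k : Fin d, Odd (j : ℕ) → (k : ℕ) = j + 1 →
      mulVecE (γ j) Ψ₀ + I • mulVecE (γ k) Ψ₀ = 0 := by
    rintro ⟨j, hj⟩ ⟨k, hk⟩ ⟨α, hα⟩ hjk
    simp only at hα hjk
    subst hα hjk
    simpa only [show 2 * (α + 1) = 2 * α + 1 + 1 by omega, Nat.add_sub_cancel, add_mulVecE,
      smul_mulVecE] using hvac (α + 1) (by omega) (by omega)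
  have hne : (1 + (‖x‖ : ℂ) ^ 2) ≠ 0 := by exact_mod_cast (by positivity : (1 + ‖x‖ ^ 2 : ℝ) ≠ 0)
  rw [dirac_one_add_norm_sq_rpow_smul hanti, curlyA_eq hodd.pos x,
    Real.rpow_sub_one (by positivity : (1 + ‖x‖ ^ 2) ≠ 0)]
  simp only [gdotR_smul, gdotR_add, gdotR_single, smul_mulVecE, add_mulVecE, mulVecE_smul]
  linear_combination (norm := skip)
    (((1 + ‖x‖ ^ 2) ^ (-(d : ℝ) / 2) * (d * ((1 + ‖x‖ ^ 2) ^ 2)⁻¹) : ℝ) : ℂ) •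
      zero_mode_identity_gdotR hodd hanti hpair hs hsΨ₀ x
  match_scalars <;> (try simp only [Complex.coe_algebraMap]) <;> field_simp <;>
    (try simp only [I_sq]) <;> ring
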